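/- Let N_A, N_B be positive integers with N_B ≥ 2, let H_A = (ℂ²)^{⊗N_A} and H_B = (ℂ²)^{⊗N_B}, and let |Ψ⟩ be a unit vector in H_A ⊗ H_B. With the GME-concurrence C_GME as seed measure, L^C(|Ψ⟩) ≤ L_global^C(|Ψ⟩) ≤ min over nonempty proper subsets γ of the qubits of H_B of √(2(1 − tr(Ψ_γ²))), where Ψ_γ is the reduced density matrix of |Ψ⟩⟨Ψ| on the qubits in γ. -/

import Mathlib

open scoped BigOperators ComplexConjugate ComplexOrder

noncomputable section

namespace QIpaper

/-- Inner product `⟨ψ|φ⟩`, conjugate-linear in the first argument. -/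
def braket {I : Type*} [Fintype I] (ψ φ : I → ℂ) : ℂ := ∑ x, conj (ψ x) * φ x

/-- Outer product `|ψ⟩⟨ψ|`. -/
def dm {I : Type*} (ψ : I → ℂ) : Matrix I I ℂ := Matrix.of fun x y => ψ x * conj (ψ y)

open Classical in
/-- Positive semidefinite square root (junk value `0` on non-PSD matrices). -/
def psdSqrt {I : Type*} [Fintype I] [DecidableEq I] (A : Matrix I I ℂ) : Matrix I I ℂ :=
  if h : A.PosSemidef then
    h.1.eigenvectorUnitary.1 * Matrix.diagonal ((↑) ∘ (√·) ∘ h.1.eigenvalues) *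
      (star h.1.eigenvectorUnitary : Matrix I I ℂ)
  else 0

/-- The trace norm `‖A‖₁ = tr √(AᴴA)`. -/
def traceNorm {I : Type*} [Fintype I] [DecidableEq I] (A : Matrix I I ℂ) : ℝ :=
  (psdSqrt (A.conjTranspose * A)).trace.re

/-- Fidelity `F(ρ,σ) = tr √(√ρ σ √ρ)`. -/
def fidelity {I : Type*} [Fintype I] [DecidableEq I] (ρ σ : Matrix I I ℂ) : ℝ :=
  (psdSqrt (psdSqrt ρ * σ * psdSqrt ρ)).trace.re

/-- Purity `tr(ρ²)`. -/
def purity {I : Type*} [Fintype I] (ρ : Matrix I I ℂ) : ℝ := ((ρ * ρ).trace).re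

def sigmaX : Matrix (Fin 2) (Fin 2) ℂ := !![0, 1; 1, 0]
def sigmaY : Matrix (Fin 2) (Fin 2) ℂ := !![0, -Complex.I; Complex.I, 0]
def sigmaZ : Matrix (Fin 2) (Fin 2) ℂ := !![1, 0; 0, -1]

/-- `σ_y^{⊗I}` on the qubits indexed by `I`. -/
def sigmaYn {I : Type*} [Fintype I] [DecidableEq I] : Matrix (I → Fin 2) (I → Fin 2) ℂ :=
  Matrix.of fun x y => ∏ k, sigmaY (x k) (y k)

/-- The `n`-tangle `τ(ψ) = |⟨ψ|σ_y^{⊗n}|ψ*⟩|`. -/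
def tangle {I : Type*} [Fintype I] [DecidableEq I] (ψ : (I → Fin 2) → ℂ) : ℝ :=
  ‖∑ x, ∑ y, conj (ψ x) * sigmaYn x y * conj (ψ y)‖

/-- Entrywise complex conjugate of a matrix. -/
def conjM {I J : Type*} (ρ : Matrix I J ℂ) : Matrix I J ℂ := Matrix.of fun x y => conj (ρ x y)

/-- `ρ̃ = σ_y^{⊗n} ρ* σ_y^{⊗n}`. -/
def tildeM {I : Type*} [Fintype I] [DecidableEq I] (ρ : Matrix (I → Fin 2) (I → Fin 2) ℂ) :
    Matrix (I → Fin 2) (I → Fin 2) ℂ := sigmaYn * conjM ρ * sigmaYn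

/-- The Wootters tilde `|ψ̃⟩ = σ_y^{⊗n}|ψ*⟩`. -/
def wtilde {I : Type*} [Fintype I] [DecidableEq I] (ψ : (I → Fin 2) → ℂ) : (I → Fin 2) → ℂ :=
  sigmaYn.mulVec (fun x => conj (ψ x))

/-- Reduced density matrix of the pure state `ψ` on the qubits in `s`
(tracing out the complement). -/
def reduced {n : ℕ} (s : Finset (Fin n)) (ψ : (Fin n → Fin 2) → ℂ) :
    Matrix ({i : Fin n // i ∈ s} → Fin 2) ({i : Fin n // i ∈ s} → Fin 2) ℂ :=
  Matrix.of fun a b => ∑ c : {i : Fin n // i ∉ s} → Fin 2,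
    ψ (fun i => if h : i ∈ s then a ⟨i, h⟩ else c ⟨i, h⟩) *
    conj (ψ (fun i => if h : i ∈ s then b ⟨i, h⟩ else c ⟨i, h⟩))

/-- GME-concurrence `C_GME(ψ) = min_{∅ ⊊ γ ⊊ [n]} √(2(1 − tr ψ_γ²))`. -/
def gme {n : ℕ} (ψ : (Fin n → Fin 2) → ℂ) : ℝ :=
  sInf {r : ℝ | ∃ γ : Finset (Fin n), γ ≠ ∅ ∧ γ ≠ Finset.univ ∧
    r = Real.sqrt (2 * (1 - purity (reduced γ ψ)))}

/-- Concentratable entanglement `C(ψ; s) = 1 − 2^{−|s|} Σ_{γ⊆s} tr(ψ_γ²)`. -/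
def CE {n : ℕ} (ψ : (Fin n → Fin 2) → ℂ) (s : Finset (Fin n)) : ℝ :=
  1 - (1 / 2 ^ s.card) * ∑ γ ∈ s.powerset, purity (reduced γ ψ)

/-- The subnormalized post-measurement vector `(⟨v|⊗I)|Ψ⟩`. -/
def contract {IA IB : Type*} [Fintype IA] (v : IA → ℂ) (Ψ : IA × IB → ℂ) : IB → ℂ :=
  fun y => ∑ x, conj (v x) * Ψ (x, y)

/-- Probability `p_v = ⟨Ψ|(|v⟩⟨v| ⊗ I)|Ψ⟩` of outcome `v`. -/
def prob {IA IB : Type*} [Fintype IA] [Fintype IB] (v : IA → ℂ) (Ψ : IA × IB → ℂ) : ℝ :=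
  (braket (contract v Ψ) (contract v Ψ)).re

/-- Normalized post-measurement state (the zero vector when the probability vanishes). -/
def postState {IA IB : Type*} [Fintype IA] [Fintype IB] (v : IA → ℂ) (Ψ : IA × IB → ℂ) :
    IB → ℂ := fun y => ((Real.sqrt (prob v Ψ) : ℂ))⁻¹ * contract v Ψ y

/-- `b` is an orthonormal family. (An orthonormal family indexed by the space's own
index type is an orthonormal basis.) -/
def ONB {J I : Type*} [Fintype I] [DecidableEq J] (b : J → I → ℂ) : Prop :=
  ∀ i j, braket (b i) (b j) = if i = j then 1 else 0

/-- Average post-measurement entanglement `Ē_β(Ψ) = Σ_i p_i E(φ_i)`. -/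
def avgE {ι IA IB : Type*} [Fintype ι] [Fintype IA] [Fintype IB]
    (E : (IB → ℂ) → ℝ) (b : ι → IA → ℂ) (Ψ : IA × IB → ℂ) : ℝ :=
  ∑ i, prob (b i) Ψ * E (postState (b i) Ψ)

/-- Multipartite entanglement of assistance: supremum of `Ē_β` over all
orthonormal bases `β` of `H_A`. -/
def Lglobal {IA IB : Type*} [Fintype IA] [Fintype IB] [DecidableEq IA]
    (E : (IB → ℂ) → ℝ) (Ψ : IA × IB → ℂ) : ℝ :=
  sSup {r : ℝ | ∃ b : IA → IA → ℂ, ONB b ∧ r = avgE E b Ψ}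

/-- Tensor-product basis of `(ℂ²)^{⊗K}` built from single-qubit bases. -/
def productBasis {K : Type*} [Fintype K] (q : K → Fin 2 → Fin 2 → ℂ) :
    (K → Fin 2) → (K → Fin 2) → ℂ :=
  fun i x => ∏ k, q k (i k) (x k)

/-- Localizable multipartite entanglement: supremum of `Ē_β` over product bases of
single-qubit orthonormal bases of `H_A = (ℂ²)^{⊗K}`. -/
def Lloc {K IB : Type*} [Fintype K] [DecidableEq K] [Fintype IB]
    (E : (IB → ℂ) → ℝ) (Ψ : (K → Fin 2) × IB → ℂ) : ℝ :=
  sSup {r : ℝ | ∃ q : K → Fin 2 → Fin 2 → ℂ, (∀ k, ONB (q k)) ∧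
    r = avgE E (productBasis q) Ψ}

/-- Partial trace over the `A` system of `|Ψ⟩⟨Ψ|`. -/
def ptraceA {IA IB : Type*} [Fintype IA] (Ψ : IA × IB → ℂ) : Matrix IB IB ℂ :=
  Matrix.of fun y y' => ∑ x, Ψ (x, y) * conj (Ψ (x, y'))

/-- Reduced density matrix of `|Ψ⟩⟨Ψ|` on the subset `s` of the `B` qubits. -/
def reducedB {IA : Type*} [Fintype IA] {n : ℕ} (s : Finset (Fin n))
    (Ψ : IA × (Fin n → Fin 2) → ℂ) :
    Matrix ({i : Fin n // i ∈ s} → Fin 2) ({i : Fin n // i ∈ s} → Fin 2) ℂ :=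
  Matrix.of fun a b => ∑ x : IA, ∑ c : {i : Fin n // i ∉ s} → Fin 2,
    Ψ (x, fun i => if h : i ∈ s then a ⟨i, h⟩ else c ⟨i, h⟩) *
    conj (Ψ (x, fun i => if h : i ∈ s then b ⟨i, h⟩ else c ⟨i, h⟩))

/-!
Measure `A` in an orthonormal basis `(bᵢ)`, with outcome probabilities `pᵢ` and post-measurement
states `φᵢ`. Completeness of the basis makes the partial trace basis independent, which gives
`Ψ_γ = Σᵢ pᵢ (φᵢ)_γ`; since the purity of a Hermitian matrix is its squared Frobenius norm, it is
convex, so `tr Ψ_γ² ≤ Σᵢ pᵢ tr (φᵢ)_γ²`. Bounding each `C_GME(φᵢ)` by the `γ`-term of its minimum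
and applying Jensen's inequality to the concave square root then gives
`Σᵢ pᵢ C_GME(φᵢ) ≤ √(2(1 − Σᵢ pᵢ tr (φᵢ)_γ²)) ≤ √(2(1 − tr Ψ_γ²))`.
The first inequality holds because product bases are orthonormal and `C_GME ≤ √2` bounds all
averages.
-/

open Finset
open scoped Matrix

section Measurement

variable {IA IB : Type*} [Fintype IA] [Fintype IB]

theorem braket_self_re (ψ : IB → ℂ) : (braket ψ ψ).re = ∑ x, Complex.normSq (ψ x) := by
  simp only [braket, Complex.re_sum, mul_comm (conj _), Complex.mul_conj, Complex.ofReal_re]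

theorem braket_self_re_nonneg (ψ : IB → ℂ) : 0 ≤ (braket ψ ψ).re := by
  rw [braket_self_re]
  exact sum_nonneg fun x _ => Complex.normSq_nonneg _

theorem prob_nonneg (v : IA → ℂ) (Ψ : IA × IB → ℂ) : 0 ≤ prob v Ψ :=
  braket_self_re_nonneg _

theorem contract_eq_zero_of_prob_eq_zero {v : IA → ℂ} {Ψ : IA × IB → ℂ} (h : prob v Ψ = 0) :
    contract v Ψ = 0 := by
  rw [prob, braket_self_re, sum_eq_zero_iff_of_nonneg fun y _ => Complex.normSq_nonneg _] at h
  exact funext fun y => Complex.normSq_eq_zero.mp (h y (mem_univ y))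

theorem postState_eq_smul (v : IA → ℂ) (Ψ : IA × IB → ℂ) :
    postState v Ψ = ((√(prob v Ψ) : ℝ) : ℂ)⁻¹ • contract v Ψ :=
  rfl

theorem braket_postState_self_re_le_one (v : IA → ℂ) (Ψ : IA × IB → ℂ) :
    (braket (postState v Ψ) (postState v Ψ)).re ≤ 1 := by
  have hnormSq : Complex.normSq ((√(prob v Ψ) : ℝ) : ℂ)⁻¹ = (prob v Ψ)⁻¹ := by
    rw [map_inv₀, Complex.normSq_ofReal, Real.mul_self_sqrt (prob_nonneg v Ψ)]
  simp only [braket_self_re, postState_eq_smul, Pi.smul_apply, smul_eq_mul,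
    Complex.normSq_mul, hnormSq, ← mul_sum]
  rw [← braket_self_re]
  exact inv_mul_le_one_of_le₀ le_rfl (prob_nonneg v Ψ)

theorem trace_dm (ψ : IB → ℂ) : (dm ψ).trace = braket ψ ψ := by
  simp only [Matrix.trace, Matrix.diag, dm, Matrix.of_apply, braket, mul_comm]

theorem trace_ptraceA (Ψ : IA × IB → ℂ) : (ptraceA Ψ).trace = braket Ψ Ψ := by
  simp only [Matrix.trace, Matrix.diag, ptraceA, Matrix.of_apply, braket, Fintype.sum_prod_type,
    mul_comm (conj _)]
  exact sum_comm

end Measurement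

namespace ONB

variable {IA IB : Type*} [Fintype IA] [DecidableEq IA] {b : IA → IA → ℂ}

theorem ptraceA_eq_sum_dm (hb : ONB b) (Ψ : IA × IB → ℂ) :
    ptraceA Ψ = ∑ i, dm (contract (b i) Ψ) := by
  set U : Matrix IA IA ℂ := Matrix.of fun i x => conj (b i x)
  set P : Matrix IA IB ℂ := Matrix.of fun x y => Ψ (x, y)
  have hU : Uᴴ * U = 1 := by
    refine mul_eq_one_comm.mp (Matrix.ext fun i j => ?_)
    simpa [U, Matrix.mul_apply, braket, Matrix.one_apply] using hb i j
  have hUP : (U * P)ᴴ * (U * P) = Pᴴ * P := by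
    rw [Matrix.conjTranspose_mul, Matrix.mul_assoc, ← Matrix.mul_assoc Uᴴ, hU, Matrix.one_mul]
  ext y y'
  have hentry := congrFun (congrFun hUP y') y
  simp only [Matrix.mul_apply, Matrix.conjTranspose_apply, U, P, Matrix.of_apply] at hentry
  simp only [ptraceA, dm, contract, Matrix.of_apply, Matrix.sum_apply]
  simpa [mul_comm] using hentry.symm

theorem sum_prob [Fintype IB] (hb : ONB b) (Ψ : IA × IB → ℂ) :
    ∑ i, prob (b i) Ψ = (braket Ψ Ψ).re := by
  simp only [prob, ← trace_dm, ← Complex.re_sum, ← Matrix.trace_sum, ← hb.ptraceA_eq_sum_dm,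
    trace_ptraceA]

theorem avgE_le_of_le [Fintype IB] (hb : ONB b) {E : (IB → ℂ) → ℝ} {C : ℝ} (hE : ∀ φ, E φ ≤ C)
    (Ψ : IA × IB → ℂ) : avgE E b Ψ ≤ C * (braket Ψ Ψ).re := by
  calc avgE E b Ψ ≤ ∑ i, prob (b i) Ψ * C :=
        sum_le_sum fun i _ => mul_le_mul_of_nonneg_left (hE _) (prob_nonneg _ _)
    _ = C * (braket Ψ Ψ).re := by rw [← sum_mul, hb.sum_prob, mul_comm]

theorem reducedB_eq_sum {n : ℕ} (hb : ONB b) (γ : Finset (Fin n))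
    (Ψ : IA × (Fin n → Fin 2) → ℂ) :
    reducedB γ Ψ = ∑ i, reduced γ (contract (b i) Ψ) := by
  ext a a'
  simp only [reducedB, reduced, Matrix.of_apply, Matrix.sum_apply]
  rw [sum_comm, sum_comm (s := univ (α := IA))]
  refine sum_congr rfl fun c _ => ?_
  simpa [ptraceA, dm, Matrix.sum_apply] using
    congrFun (congrFun (hb.ptraceA_eq_sum_dm Ψ) _) _

end ONB

theorem onb_standard {I : Type*} [Fintype I] [DecidableEq I] :
    ONB (fun i x : I => if i = x then (1 : ℂ) else 0) := by
  intro i j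
  simp [braket, apply_ite (starRingEnd ℂ)]

theorem onb_productBasis {K : Type*} [Fintype K] [DecidableEq K] {q : K → Fin 2 → Fin 2 → ℂ}
    (hq : ∀ k, ONB (q k)) : ONB (productBasis q) := by
  intro i j
  have hfactor : braket (productBasis q i) (productBasis q j)
      = ∏ k, braket (q k (i k)) (q k (j k)) := by
    simp only [braket, productBasis, map_prod, ← prod_mul_distrib]
    exact (Fintype.prod_sum fun k x => conj (q k (i k) x) * q k (j k) x).symm
  rw [hfactor, prod_congr rfl fun k _ => hq k (i k) (j k), prod_boole]
  simp [funext_iff]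

section Purity

variable {J : Type*} [Fintype J]

theorem purity_eq_sum_normSq {ρ : Matrix J J ℂ} (hρ : ρ.IsHermitian) :
    purity ρ = ∑ a, ∑ b, Complex.normSq (ρ a b) := by
  simp only [purity, Matrix.trace, Matrix.diag, Matrix.mul_apply, Complex.re_sum]
  refine sum_congr rfl fun a _ => sum_congr rfl fun b _ => ?_
  rw [← hρ.apply b a, Complex.star_def, Complex.mul_conj, Complex.ofReal_re]

theorem purity_nonneg {ρ : Matrix J J ℂ} (hρ : ρ.IsHermitian) :
    0 ≤ purity ρ := by
  rw [purity_eq_sum_normSq hρ]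
  exact sum_nonneg fun a _ => sum_nonneg fun b _ => Complex.normSq_nonneg _

attribute [local instance] Matrix.frobeniusNormedAddCommGroup Matrix.frobeniusNormedSpace

theorem purity_eq_frobenius_norm_sq {ρ : Matrix J J ℂ} (hρ : ρ.IsHermitian) :
    purity ρ = ‖ρ‖ ^ 2 := by
  rw [Matrix.frobenius_norm_def, ← Real.sqrt_eq_rpow, Real.sq_sqrt (by positivity),
    purity_eq_sum_normSq hρ]
  simp only [Real.rpow_two, Complex.sq_norm]

theorem purity_sum_smul_le {ι : Type*} [Fintype ι] {σ : ι → Matrix J J ℂ}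
    (hσ : ∀ i, (σ i).IsHermitian) {p : ι → ℝ} (hp₀ : ∀ i, 0 ≤ p i) (hp₁ : ∑ i, p i = 1) :
    purity (∑ i, p i • σ i) ≤ ∑ i, p i * purity (σ i) := by
  have hsum : (∑ i, p i • σ i).IsHermitian :=
    isSelfAdjoint_sum _ fun i _ => (IsSelfAdjoint.all (p i)).smul (hσ i).isSelfAdjoint
  simp only [purity_eq_frobenius_norm_sq hsum, purity_eq_frobenius_norm_sq (hσ _)]
  exact ((convexOn_norm convex_univ).pow (fun _ _ => norm_nonneg _) 2).map_sum_le
    (fun i _ => hp₀ i) hp₁ (fun i _ => Set.mem_univ _)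

end Purity

section Reduced

variable {n : ℕ} (γ : Finset (Fin n))

theorem reduced_apply (ψ : (Fin n → Fin 2) → ℂ) (a b : {i // i ∈ γ} → Fin 2) :
    reduced γ ψ a b = ∑ c, ψ ((Equiv.piEquivPiSubtypeProd (· ∈ γ) fun _ => Fin 2).symm (a, c)) *
      conj (ψ ((Equiv.piEquivPiSubtypeProd (· ∈ γ) fun _ => Fin 2).symm (b, c))) :=
  rfl

theorem reduced_isHermitian (ψ : (Fin n → Fin 2) → ℂ) : (reduced γ ψ).IsHermitian := by
  ext a b
  simp only [Matrix.conjTranspose_apply, reduced_apply, star_sum, star_mul', Complex.star_def,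
    Complex.conj_conj, mul_comm]

theorem reduced_smul (t : ℂ) (ψ : (Fin n → Fin 2) → ℂ) :
    reduced γ (t • ψ) = Complex.normSq t • reduced γ ψ := by
  ext a b
  simp only [reduced_apply, Pi.smul_apply, smul_eq_mul, Matrix.smul_apply, Complex.real_smul,
    mul_sum, map_mul, Complex.normSq_eq_conj_mul_self]
  refine sum_congr rfl fun c _ => by ring

theorem trace_reduced (ψ : (Fin n → Fin 2) → ℂ) : (reduced γ ψ).trace = braket ψ ψ := by
  rw [braket, ← Equiv.sum_comp (Equiv.piEquivPiSubtypeProd (· ∈ γ) fun _ => Fin 2).symm,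
    Fintype.sum_prod_type]
  simp only [Matrix.trace, Matrix.diag, reduced_apply, mul_comm]

theorem normSq_reduced_le (ψ : (Fin n → Fin 2) → ℂ) (a b : {i // i ∈ γ} → Fin 2) :
    Complex.normSq (reduced γ ψ a b) ≤ (reduced γ ψ a a).re * (reduced γ ψ b b).re := by
  set e := (Equiv.piEquivPiSubtypeProd (· ∈ γ) fun _ => Fin 2).symm
  have hdiag : ∀ a, (reduced γ ψ a a).re = ∑ c, ‖ψ (e (a, c))‖ ^ 2 := fun a => by
    simp only [reduced_apply, Complex.re_sum, Complex.mul_conj, Complex.ofReal_re,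
      Complex.sq_norm, e]
  calc Complex.normSq (reduced γ ψ a b) = ‖reduced γ ψ a b‖ ^ 2 := (Complex.sq_norm _).symm
    _ ≤ (∑ c, ‖ψ (e (a, c))‖ * ‖ψ (e (b, c))‖) ^ 2 := by
      refine pow_le_pow_left₀ (norm_nonneg _) ?_ 2
      rw [reduced_apply]
      exact (norm_sum_le _ _).trans_eq (by simp only [norm_mul, Complex.norm_conj, e])
    _ ≤ (∑ c, ‖ψ (e (a, c))‖ ^ 2) * ∑ c, ‖ψ (e (b, c))‖ ^ 2 := sum_mul_sq_le_sq_mul_sq _ _ _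
    _ = (reduced γ ψ a a).re * (reduced γ ψ b b).re := by rw [hdiag, hdiag]

theorem purity_reduced_le_sq (ψ : (Fin n → Fin 2) → ℂ) :
    purity (reduced γ ψ) ≤ (braket ψ ψ).re ^ 2 := by
  calc purity (reduced γ ψ) = ∑ a, ∑ b, Complex.normSq (reduced γ ψ a b) :=
        purity_eq_sum_normSq (reduced_isHermitian γ ψ)
    _ ≤ ∑ a, ∑ b, (reduced γ ψ a a).re * (reduced γ ψ b b).re :=
        sum_le_sum fun a _ => sum_le_sum fun b _ => normSq_reduced_le γ ψ a b
    _ = (braket ψ ψ).re ^ 2 := by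
        rw [← trace_reduced γ ψ, sq, Matrix.trace, Complex.re_sum, sum_mul_sum]
        rfl

end Reduced

theorem reduced_contract_eq_prob_smul {IA : Type*} [Fintype IA] {n : ℕ} (γ : Finset (Fin n))
    (v : IA → ℂ) (Ψ : IA × (Fin n → Fin 2) → ℂ) :
    reduced γ (contract v Ψ) = prob v Ψ • reduced γ (postState v Ψ) := by
  rw [postState_eq_smul, reduced_smul, smul_smul, map_inv₀, Complex.normSq_ofReal,
    Real.mul_self_sqrt (prob_nonneg v Ψ)]
  rcases eq_or_ne (prob v Ψ) 0 with hp | hp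
  · rw [contract_eq_zero_of_prob_eq_zero hp, hp, zero_mul, zero_smul]
    ext
    simp [reduced_apply]
  · rw [mul_inv_cancel₀ hp, one_smul]

theorem purity_reduced_postState_le_one {IA : Type*} [Fintype IA] {n : ℕ} (γ : Finset (Fin n))
    (v : IA → ℂ) (Ψ : IA × (Fin n → Fin 2) → ℂ) :
    purity (reduced γ (postState v Ψ)) ≤ 1 :=
  (purity_reduced_le_sq γ _).trans
    (pow_le_one₀ (braket_self_re_nonneg _) (braket_postState_self_re_le_one v Ψ))

section GME

variable {n : ℕ}

theorem gme_le {γ : Finset (Fin n)} (hγ₀ : γ ≠ ∅) (hγ : γ ≠ univ) (ψ : (Fin n → Fin 2) → ℂ) :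
    gme ψ ≤ √(2 * (1 - purity (reduced γ ψ))) :=
  csInf_le ⟨0, by rintro r ⟨γ, -, -, rfl⟩; exact Real.sqrt_nonneg _⟩ ⟨γ, hγ₀, hγ, rfl⟩

theorem gme_le_sqrt_two (hn : 2 ≤ n) (ψ : (Fin n → Fin 2) → ℂ) : gme ψ ≤ √2 := by
  have hne : ({⟨0, by omega⟩} : Finset (Fin n)) ≠ univ := fun h => by
    have := congrArg card h
    simp only [card_singleton, card_univ, Fintype.card_fin] at this
    omega
  refine (gme_le (singleton_ne_empty _) hne ψ).trans (Real.sqrt_le_sqrt ?_)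
  linarith [purity_nonneg (reduced_isHermitian {⟨0, by omega⟩} ψ)]

end GME

theorem ONB.avgE_gme_le {IA : Type*} [Fintype IA] [DecidableEq IA] {n : ℕ} {b : IA → IA → ℂ}
    (hb : ONB b) {γ : Finset (Fin n)} (hγ₀ : γ ≠ ∅) (hγ : γ ≠ univ)
    {Ψ : IA × (Fin n → Fin 2) → ℂ} (hΨ : braket Ψ Ψ = 1) :
    avgE gme b Ψ ≤ √(2 * (1 - purity (reducedB γ Ψ))) := by
  set p := fun i => prob (b i) Ψ
  set σ := fun i => reduced γ (postState (b i) Ψ)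
  have hp₀ : ∀ i, 0 ≤ p i := fun i => prob_nonneg _ _
  have hp₁ : ∑ i, p i = 1 := by simp [p, hb.sum_prob, hΨ]
  have hconvex : purity (reducedB γ Ψ) ≤ ∑ i, p i * purity (σ i) := by
    simp only [hb.reducedB_eq_sum, reduced_contract_eq_prob_smul]
    exact purity_sum_smul_le (fun i => reduced_isHermitian γ _) hp₀ hp₁
  have hσ : ∀ i, 2 * (1 - purity (σ i)) ∈ Set.Ici 0 := fun i => by
    simpa using purity_reduced_postState_le_one γ (b i) Ψ
  calc avgE gme b Ψ ≤ ∑ i, p i * √(2 * (1 - purity (σ i))) :=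
        sum_le_sum fun i _ => mul_le_mul_of_nonneg_left (gme_le hγ₀ hγ _) (hp₀ i)
    _ ≤ √(∑ i, p i * (2 * (1 - purity (σ i)))) := by
        simpa only [smul_eq_mul] using Real.strictConcaveOn_sqrt.concaveOn.le_map_sum
          (fun i _ => hp₀ i) hp₁ (fun i _ => hσ i)
    _ = √(2 * (1 - ∑ i, p i * purity (σ i))) := by
        congr 1
        conv_rhs => rw [← hp₁, ← sum_sub_distrib, mul_sum]
        exact sum_congr rfl fun i _ => by ring
    _ ≤ √(2 * (1 - purity (reducedB γ Ψ))) := Real.sqrt_le_sqrt (by linarith)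

theorem lglobal_gme_le {IA : Type*} [Fintype IA] [DecidableEq IA] {n : ℕ}
    {γ : Finset (Fin n)} (hγ₀ : γ ≠ ∅) (hγ : γ ≠ univ)
    {Ψ : IA × (Fin n → Fin 2) → ℂ} (hΨ : braket Ψ Ψ = 1) :
    Lglobal gme Ψ ≤ √(2 * (1 - purity (reducedB γ Ψ))) :=
  Real.sSup_le (by rintro r ⟨b, hb, rfl⟩; exact hb.avgE_gme_le hγ₀ hγ hΨ) (Real.sqrt_nonneg _)

theorem lloc_le_lglobal {K IB : Type*} [Fintype K] [DecidableEq K] [Fintype IB]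
    {E : (IB → ℂ) → ℝ} {C : ℝ} (hE : ∀ φ, E φ ≤ C) (Ψ : (K → Fin 2) × IB → ℂ) :
    Lloc E Ψ ≤ Lglobal E Ψ := by
  refine csSup_le_csSup ⟨C * (braket Ψ Ψ).re, ?_⟩ ⟨_, _, fun _ => onb_standard, rfl⟩ ?_
  · rintro r ⟨b, hb, rfl⟩
    exact hb.avgE_le_of_le hE Ψ
  · rintro r ⟨q, hq, rfl⟩
    exact ⟨productBasis q, onb_productBasis hq, rfl⟩

theorem gme_localizable_le_assistance_le_min_purity_general
    (NA NB : ℕ) (hNB : 2 ≤ NB)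
    (Ψ : (Fin NA → Fin 2) × (Fin NB → Fin 2) → ℂ) (hΨ : braket Ψ Ψ = 1) :
    Lloc gme Ψ ≤ Lglobal gme Ψ ∧
    ∀ γ : Finset (Fin NB), γ ≠ ∅ → γ ≠ Finset.univ →
      Lglobal gme Ψ ≤ Real.sqrt (2 * (1 - purity (reducedB γ Ψ))) :=
  ⟨lloc_le_lglobal (gme_le_sqrt_two hNB) Ψ, fun _ hγ₀ hγ => lglobal_gme_le hγ₀ hγ hΨ⟩

/-- For a unit vector `Ψ` in `(ℂ²)^{⊗N_A} ⊗ (ℂ²)^{⊗N_B}` with `N_B ≥ 2`,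
the localizable multipartite entanglement and multipartite entanglement of assistance with the
GME-concurrence as seed measure satisfy `L^C(Ψ) ≤ L^C_global(Ψ) ≤
min_{∅ ⊊ γ ⊊ B} √(2(1 − tr Ψ_γ²))`. -/
theorem gme_localizable_le_assistance_le_min_purity
    (NA NB : ℕ) (hNA : 0 < NA) (hNB : 2 ≤ NB)
    (Ψ : (Fin NA → Fin 2) × (Fin NB → Fin 2) → ℂ) (hΨ : braket Ψ Ψ = 1) :
    Lloc gme Ψ ≤ Lglobal gme Ψ ∧
    ∀ γ : Finset (Fin NB), γ ≠ ∅ → γ ≠ Finset.univ →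
      Lglobal gme Ψ ≤ Real.sqrt (2 * (1 - purity (reducedB γ Ψ))) :=
  gme_localizable_le_assistance_le_min_purity_general NA NB hNB Ψ hΨ

end QIpaper
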